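/- For positive reals a, b with s·a ≤ b ≤ t·a for some 0 < s ≤ t ≤ 1, and v ∈ [0,1]: g_v(t)·a ≤ (1-v)a + vb - a^(1-v)b^v ≤ g_v(s)·a, where g_v(x) = (1-v) + vx - x^v. -/

import Mathlib

/-!
Writing `b = r a` with `r = b / a ∈ [s, t]`, homogeneity gives
`(1 - v) a + v b - a ^ (1 - v) b ^ v = g_v(r) a`, and `g_v` is antitone on `(0, 1]` because
`g_v'(x) = v (1 - x ^ (v - 1)) ≤ 0` there.
-/

open Real Set

noncomputable def youngGap (v x : ℝ) : ℝ := (1 - v) + v * x - x ^ v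

lemma hasDerivAt_youngGap (v : ℝ) {x : ℝ} (hx : 0 < x) :
    HasDerivAt (youngGap v) (v - v * x ^ (v - 1)) x := by
  have h := (((hasDerivAt_id x).const_mul v).const_add (1 - v)).sub
    (hasDerivAt_rpow_const (p := v) (Or.inl hx.ne'))
  simp only [id, mul_one] at h
  exact h

lemma youngGap_antitoneOn {v : ℝ} (hv0 : 0 ≤ v) (hv1 : v ≤ 1) :
    AntitoneOn (youngGap v) (Ioc 0 1) := by
  refine antitoneOn_of_deriv_nonpos (convex_Ioc 0 1) ?_ ?_ ?_
  · exact fun x hx => (hasDerivAt_youngGap v hx.1).continuousAt.continuousWithinAt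
  · rw [interior_Ioc]
    exact fun x hx => (hasDerivAt_youngGap v hx.1).differentiableAt.differentiableWithinAt
  · rw [interior_Ioc]
    intro x hx
    rw [(hasDerivAt_youngGap v hx.1).deriv]
    have : 1 ≤ x ^ (v - 1) := one_le_rpow_of_pos_of_le_one_of_nonpos hx.1 hx.2.le (by linarith)
    nlinarith

lemma weighted_mean_gap_eq_youngGap_div_mul (v : ℝ) {a b : ℝ} (ha : 0 < a) (hb : 0 ≤ b) :
    (1 - v) * a + v * b - a ^ (1 - v) * b ^ v = youngGap v (b / a) * a := by
  have hpow : a ^ (1 - v) * b ^ v = (b / a) ^ v * a := by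
    rw [div_rpow hb ha.le, rpow_sub ha, rpow_one]
    field_simp
  rw [hpow, youngGap]
  field_simp

theorem stmt_16 (a b s t v : ℝ) (ha : 0 < a) (hb : 0 < b)
    (hs : 0 < s) (hst : s ≤ t) (ht : t ≤ 1)
    (hsa : s * a ≤ b) (hbt : b ≤ t * a) (hv0 : 0 ≤ v) (hv1 : v ≤ 1) :
    ((1 - v) + v * t - t ^ v) * a ≤ (1 - v) * a + v * b - a ^ (1 - v) * b ^ v ∧
    (1 - v) * a + v * b - a ^ (1 - v) * b ^ v ≤ ((1 - v) + v * s - s ^ v) * a := by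
  have hsr : s ≤ b / a := (le_div_iff₀ ha).2 hsa
  have hrt : b / a ≤ t := (div_le_iff₀ ha).2 hbt
  have hr : b / a ∈ Ioc (0 : ℝ) 1 := ⟨hs.trans_le hsr, hrt.trans ht⟩
  rw [weighted_mean_gap_eq_youngGap_div_mul v ha hb.le]
  have hg := youngGap_antitoneOn hv0 hv1
  exact ⟨mul_le_mul_of_nonneg_right (hg hr ⟨hs.trans_le hst, ht⟩ hrt) ha.le,
    mul_le_mul_of_nonneg_right (hg ⟨hs, hst.trans ht⟩ hr hsr) ha.le⟩
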